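/- Let G ∈ 𝒢_n^m, let 0 ≤ α < 1, and let v₁ ∈ S attain the maximum within-S outdegree (d*(v₁) ≥ d*(s) for all s ∈ S). Then α²·Σ_{s∈S}(d*(s))² + α²(n−m) + (1−α)²·c₂(G*) ≤ E_α(G) ≤ α²·(d*(v₁)+n−m)² + α²·Σ_{s∈S, s≠v₁}(d*(s))² + (1−α)²·c₂(G*). Moreover, for 0 < α < 1: the lower bound is attained if and only if every hung tree is an in-tree with root at its vertex of S (inside each fiber the root has outdegree 0 and every other vertex has outdegree 1); the upper bound is attained if and only if there is a vertex v of maximal within-S outdegree such that n_s = 1 for every s ∈ S with s ≠ v and the fiber at v induces an out-star with centre v. -/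

import Mathlib

open Polynomial Matrix Finset

/-- The outdegree of a vertex `v` of the digraph with adjacency matrix `A`. -/
noncomputable def outdeg {V : Type*} [Fintype V] (A : Matrix V V ℝ) (v : V) : ℝ := ∑ w, A v w

/-- The `A_α`-matrix `α·D⁺ + (1-α)·A` of a digraph with adjacency matrix `A`. -/
noncomputable def Aalpha {V : Type*} [Fintype V] [DecidableEq V] (α : ℝ) (A : Matrix V V ℝ) :
    Matrix V V ℝ :=
  α • Matrix.diagonal (outdeg A) + (1 - α) • A

/-- The spectral radius of a real square matrix: the maximum modulus of its complex
eigenvalues (roots of the characteristic polynomial over `ℂ`). -/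
noncomputable def specRad {V : Type*} [Fintype V] [DecidableEq V] (M : Matrix V V ℝ) : ℝ :=
  sSup {x : ℝ | ∃ z : ℂ, (M.map ((↑) : ℝ → ℂ)).charpoly.IsRoot z ∧ ‖z‖ = x}

/-- The `A_α` energy of a digraph: the sum of the squares of the eigenvalues of its
`A_α`-matrix, equivalently `trace (A_α(G)²)`. -/
noncomputable def Ealpha {V : Type*} [Fintype V] [DecidableEq V] (α : ℝ) (A : Matrix V V ℝ) : ℝ :=
  Matrix.trace (Aalpha α A * Aalpha α A)

/-- The outdegree of `s` within the vertex set `S` (the within-`S` outdegree `d*(s)`). -/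
noncomputable def dStar {V : Type*} [Fintype V] (A : Matrix V V ℝ) (S : Finset V) (s : V) : ℝ :=
  ∑ v ∈ S, A s v

/-- The size `n_s` of the fiber `r⁻¹(s)`. -/
def fibCard {V : Type*} [Fintype V] [DecidableEq V] (r : V → V) (s : V) : ℕ :=
  (Finset.univ.filter (fun v => r v = s)).card

/-- The underlying undirected graph of the induced subdigraph on the fiber `r⁻¹(s)`. -/
def fiberGraph {V : Type*} (A : Matrix V V ℝ) (r : V → V) (s : V) :
    SimpleGraph {v : V // r v = s} where
  Adj u w := u ≠ w ∧ (A u.1 w.1 = 1 ∨ A w.1 u.1 = 1)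
  symm := ⟨fun _ _ h => ⟨h.1.symm, h.2.symm⟩⟩
  loopless := ⟨fun _ h => h.1 rfl⟩

/-- The principal submatrix of `A` with rows and columns indexed by `S`. -/
def subm {V : Type*} (A : Matrix V V ℝ) (S : Finset V) :
    Matrix {v : V // v ∈ S} {v : V // v ∈ S} ℝ :=
  A.submatrix (fun x => x.1) (fun x => x.1)

/-- `c₂(G*) = trace(A*²)`, the number of closed walks of length 2 in the strong component. -/
noncomputable def c2star {V : Type*} [Fintype V] [DecidableEq V] (A : Matrix V V ℝ)
    (S : Finset V) : ℝ :=
  Matrix.trace (subm A S * subm A S)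

/-- Membership in the class `𝒢_n^m`: `A` is the adjacency matrix of a digraph of order `n`
with a unique strong component on the vertex set `S` of order `m`, with a directed tree
(the fiber `r⁻¹(s)`) hung on each vertex `s ∈ S`. -/
structure IsGnm {V : Type*} [Fintype V] [DecidableEq V] (A : Matrix V V ℝ) (S : Finset V)
    (r : V → V) (n m : ℕ) : Prop where
  zero_one : ∀ u v, A u v = 0 ∨ A u v = 1
  loopless : ∀ v, A v v = 0
  card_V : Fintype.card V = n
  card_S : S.card = m
  two_le_m : 2 ≤ m
  m_lt_n : m < n
  strong : ∀ u ∈ S, ∀ v ∈ S, Relation.ReflTransGen (fun a b => a ∈ S ∧ b ∈ S ∧ A a b = 1) u v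
  r_mem : ∀ v, r v ∈ S
  r_fix : ∀ s ∈ S, r s = s
  arc_cases : ∀ u v, A u v = 1 → (u ∈ S ∧ v ∈ S) ∨ r u = r v
  fiber_no_symm : ∀ u v, r u = r v → A u v = 1 → A v u = 0
  fiber_tree : ∀ s ∈ S, (fiberGraph A r s).IsTree

/-- Every hung tree is an in-tree with root at its vertex of `S`: inside each fiber the
root has outdegree `0` and every other vertex has outdegree `1`. -/
def InTrees {V : Type*} [Fintype V] [DecidableEq V] (A : Matrix V V ℝ) (S : Finset V)
    (r : V → V) : Prop :=
  (∀ v, v ∉ S → (∑ w ∈ Finset.univ.filter (fun w => r w = r v), A v w) = 1) ∧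
  (∀ s ∈ S, (∑ w ∈ Finset.univ.filter (fun w => r w = s), A s w) = 0)

/-- All hung trees are trivial except the one at `v`, which is an out-star with centre `v`. -/
def OutStarAt {V : Type*} [Fintype V] [DecidableEq V] (A : Matrix V V ℝ) (S : Finset V)
    (r : V → V) (v : V) : Prop :=
  (∀ s ∈ S, s ≠ v → fibCard r s = 1) ∧ (∀ u w, r u = v → A u w = 1 → u = v)

/-!
Since `A` has zero diagonal and every closed walk of length two stays inside `S`,
`E_α(G) = α² Σ_v d⁺(v)² + (1-α)² c₂(G*)`. Let `t(v)` be the number of arcs leaving `v` inside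
its hung tree: then `d⁺(s) = d*(s) + t(s)` on `S` and `d⁺(v) = t(v)` off `S`, and the `t(v)` are
natural numbers summing to `n - m`, because a tree on `n_s` vertices has `n_s - 1` arcs.
The lower bound follows from `(d + t)² ≥ d² + t` and `t² ≥ t`, the upper one from
`Σ_S d*(s) t(s) ≤ d*(v₁) Σ t` and `Σ t² ≤ (Σ t)²`. Equality in the first forces `t = 0` on `S`
and `t = 1` off `S` (in-trees); equality in the second forces `t` to be concentrated at one
vertex of maximal `d*` (an out-star there, all other trees trivial).
-/

theorem sum_sum_eq_card_edgeFinset {W : Type*} [Fintype W] (G : SimpleGraph W)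
    [DecidableRel G.Adj] {B : Matrix W W ℝ} (hB : B + Bᵀ = G.adjMatrix ℝ) :
    ∑ i, ∑ j, B i j = #G.edgeFinset := by
  have h := congrArg (fun M : Matrix W W ℝ => ∑ i, ∑ j, M i j) hB
  simp only [Matrix.add_apply, Matrix.transpose_apply, Finset.sum_add_distrib] at h
  rw [Finset.sum_comm (f := fun i j => B j i)] at h
  have hdeg : ∑ i, ∑ j, G.adjMatrix ℝ i j = 2 * #G.edgeFinset := by
    have := G.sum_degrees_eq_twice_card_edges
    simp only [← SimpleGraph.card_neighborFinset_eq_degree, SimpleGraph.neighborFinset_eq_filter]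
      at this
    simp only [SimpleGraph.adjMatrix_apply, Finset.sum_boole]
    exact_mod_cast this
  linarith

theorem exists_forall_ne_eq_zero_of_sq_sum_eq_sum_sq {ι : Type*} [Fintype ι] [Nonempty ι]
    {f : ι → ℝ} (hf : ∀ i, 0 ≤ f i) (h : (∑ i, f i) ^ 2 = ∑ i, f i ^ 2) :
    ∃ j, ∀ i ≠ j, f i = 0 := by
  classical
  have hle : ∀ i, f i ≤ ∑ k, f k := fun i => Finset.single_le_sum (fun k _ => hf k) (mem_univ i)
  have hcross : ∀ i, f i * (∑ k, f k - f i) = 0 := by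
    have hsum : ∑ i, f i * (∑ k, f k - f i) = 0 := by
      simp only [mul_sub, Finset.sum_sub_distrib, ← Finset.sum_mul, ← sq, h, sub_self]
    intro i
    exact (Finset.sum_eq_zero_iff_of_nonneg fun k _ => mul_nonneg (hf k) (sub_nonneg.2 (hle k))).1
      hsum i (mem_univ i)
  by_cases hzero : ∀ i, f i = 0
  · exact ⟨Classical.arbitrary ι, fun i _ => hzero i⟩
  push Not at hzero
  obtain ⟨j, hj⟩ := hzero
  refine ⟨j, fun i hij => ?_⟩
  have hfj : f j = ∑ k, f k := by linarith [(mul_eq_zero.1 (hcross j)).resolve_left hj]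
  have hpair : f i + f j ≤ ∑ k, f k := by
    have := Finset.sum_le_sum_of_subset_of_nonneg (subset_univ {i, j}) fun k _ _ => hf k
    rwa [Finset.sum_pair hij] at this
  linarith [hf i]

section SquareSums

variable {V : Type*} [Fintype V] {S : Finset V} {d t : V → ℝ}

theorem sum_mul_le_mul_sum {v₁ : V} (hmax : ∀ s ∈ S, d s ≤ d v₁) (hd₁ : 0 ≤ d v₁)
    (ht : ∀ v, 0 ≤ t v) : ∑ s ∈ S, d s * t s ≤ d v₁ * ∑ v, t v :=
  calc ∑ s ∈ S, d s * t s ≤ ∑ s ∈ S, d v₁ * t s :=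
        Finset.sum_le_sum fun s hs => mul_le_mul_of_nonneg_right (hmax s hs) (ht s)
    _ ≤ d v₁ * ∑ v, t v := by
        rw [← Finset.mul_sum]
        exact mul_le_mul_of_nonneg_left
          (Finset.sum_le_sum_of_subset_of_nonneg (subset_univ S) fun v _ _ => ht v) hd₁

variable [DecidableEq V]

theorem sum_add_sq_sub_sum_sq_add_sum :
    ∑ s ∈ S, (d s + t s) ^ 2 + ∑ v ∈ Sᶜ, t v ^ 2 - (∑ s ∈ S, d s ^ 2 + ∑ v, t v) =
      ∑ s ∈ S, (2 * d s * t s + (t s ^ 2 - t s)) + ∑ v ∈ Sᶜ, (t v ^ 2 - t v) := by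
  rw [← Finset.sum_add_sum_compl S t]
  simp only [Finset.sum_add_distrib, Finset.sum_sub_distrib, add_sq]
  ring

theorem sq_add_sum_sq_sub_sum_add_sq {v₁ : V} (hv₁ : v₁ ∈ S) :
    (d v₁ + ∑ v, t v) ^ 2 + ∑ s ∈ S.erase v₁, d s ^ 2 -
        (∑ s ∈ S, (d s + t s) ^ 2 + ∑ v ∈ Sᶜ, t v ^ 2) =
      2 * (d v₁ * ∑ v, t v - ∑ s ∈ S, d s * t s) + ((∑ v, t v) ^ 2 - ∑ v, t v ^ 2) := by
  rw [← Finset.sum_add_sum_compl S (fun v => t v ^ 2), Finset.sum_erase_eq_sub hv₁]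
  simp only [add_sq, Finset.sum_add_distrib, mul_assoc, ← Finset.mul_sum]
  ring

theorem sum_sq_add_sum_le_sum_add_sq (hd : ∀ s ∈ S, 0 ≤ d s) (ht : ∀ v, 0 ≤ t v)
    (ht2 : ∀ v, t v ≤ t v ^ 2) :
    ∑ s ∈ S, d s ^ 2 + ∑ v, t v ≤ ∑ s ∈ S, (d s + t s) ^ 2 + ∑ v ∈ Sᶜ, t v ^ 2 := by
  have := sum_add_sq_sub_sum_sq_add_sum (S := S) (d := d) (t := t)
  have h1 : 0 ≤ ∑ s ∈ S, (2 * d s * t s + (t s ^ 2 - t s)) :=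
    Finset.sum_nonneg fun s hs => by nlinarith [hd s hs, ht s, ht2 s]
  have h2 : 0 ≤ ∑ v ∈ Sᶜ, (t v ^ 2 - t v) := Finset.sum_nonneg fun v _ => by linarith [ht2 v]
  linarith

theorem sum_add_sq_eq_sum_sq_add_sum_iff (hd : ∀ s ∈ S, 0 < d s) (ht : ∀ v, 0 ≤ t v)
    (ht2 : ∀ v, t v ≤ t v ^ 2) :
    ∑ s ∈ S, (d s + t s) ^ 2 + ∑ v ∈ Sᶜ, t v ^ 2 = ∑ s ∈ S, d s ^ 2 + ∑ v, t v ↔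
      (∀ s ∈ S, t s = 0) ∧ ∀ v ∈ Sᶜ, t v ^ 2 = t v := by
  have hS : ∀ s ∈ S, 0 ≤ 2 * d s * t s + (t s ^ 2 - t s) := fun s hs => by
    nlinarith [hd s hs, ht s, ht2 s]
  have hSc : ∀ v ∈ Sᶜ, 0 ≤ t v ^ 2 - t v := fun v _ => by linarith [ht2 v]
  rw [← sub_eq_zero, sum_add_sq_sub_sum_sq_add_sum,
    add_eq_zero_iff_of_nonneg (Finset.sum_nonneg hS) (Finset.sum_nonneg hSc),
    Finset.sum_eq_zero_iff_of_nonneg hS, Finset.sum_eq_zero_iff_of_nonneg hSc]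
  refine and_congr (forall₂_congr fun s hs => ⟨fun h => ?_, fun h => by simp [h]⟩)
    (forall₂_congr fun v _ => sub_eq_zero)
  have hdt : d s * t s = 0 := by nlinarith [mul_nonneg (hd s hs).le (ht s), ht2 s]
  exact (mul_eq_zero.1 hdt).resolve_left (hd s hs).ne'

theorem sum_add_sq_le_sq_add_sum_sq {v₁ : V} (hv₁ : v₁ ∈ S) (hmax : ∀ s ∈ S, d s ≤ d v₁)
    (hd₁ : 0 ≤ d v₁) (ht : ∀ v, 0 ≤ t v) :
    ∑ s ∈ S, (d s + t s) ^ 2 + ∑ v ∈ Sᶜ, t v ^ 2 ≤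
      (d v₁ + ∑ v, t v) ^ 2 + ∑ s ∈ S.erase v₁, d s ^ 2 := by
  have := sq_add_sum_sq_sub_sum_add_sq (d := d) (t := t) hv₁
  have h1 := sum_mul_le_mul_sum hmax hd₁ ht
  have h2 := Finset.sum_sq_le_sq_sum_of_nonneg (s := univ) fun v _ => ht v
  linarith

theorem sum_add_sq_eq_sq_add_sum_sq_iff {v₁ : V} (hv₁ : v₁ ∈ S) (hmax : ∀ s ∈ S, d s ≤ d v₁)
    (hd₁ : 0 < d v₁) (ht : ∀ v, 0 ≤ t v) (hT : 0 < ∑ v, t v) :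
    ∑ s ∈ S, (d s + t s) ^ 2 + ∑ v ∈ Sᶜ, t v ^ 2 =
        (d v₁ + ∑ v, t v) ^ 2 + ∑ s ∈ S.erase v₁, d s ^ 2 ↔
      ∃ v ∈ S, d v = d v₁ ∧ ∀ u ≠ v, t u = 0 := by
  have h1 := sum_mul_le_mul_sum hmax hd₁.le ht
  have h2 := Finset.sum_sq_le_sq_sum_of_nonneg (s := univ) fun v _ => ht v
  rw [eq_comm, ← sub_eq_zero, sq_add_sum_sq_sub_sum_add_sq hv₁,
    add_eq_zero_iff_of_nonneg (by linarith) (by linarith), mul_eq_zero, sub_eq_zero, sub_eq_zero]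
  simp only [two_ne_zero, false_or]
  constructor
  · rintro ⟨hdt, htt⟩
    have : Nonempty V := ⟨v₁⟩
    obtain ⟨v, hv⟩ := exists_forall_ne_eq_zero_of_sq_sum_eq_sum_sq ht htt
    have hsum : ∑ u, t u = t v := Fintype.sum_eq_single v hv
    have hvS : v ∈ S := by
      by_contra hvS
      have : ∑ s ∈ S, d s * t s = 0 :=
        Finset.sum_eq_zero fun s hs => by rw [hv s (ne_of_mem_of_not_mem hs hvS), mul_zero]
      nlinarith
    rw [Finset.sum_eq_single_of_mem v hvS fun s _ hsv => by rw [hv s hsv, mul_zero], hsum] at hdt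
    exact ⟨v, hvS, (mul_right_cancel₀ (hsum ▸ hT.ne') hdt).symm, hv⟩
  · rintro ⟨v, hvS, hdv, hv⟩
    rw [Finset.sum_eq_single_of_mem v hvS fun s _ hsv => by rw [hv s hsv, mul_zero],
      Fintype.sum_eq_single v hv, Fintype.sum_eq_single v fun u hu => by rw [hv u hu, sq, mul_zero],
      hdv]
    exact ⟨rfl, rfl⟩

end SquareSums

theorem sum_le_sq_sum_of_zero_or_one {ι : Type*} {s : Finset ι} {f : ι → ℝ}
    (hf : ∀ i, f i = 0 ∨ f i = 1) : ∑ i ∈ s, f i ≤ (∑ i ∈ s, f i) ^ 2 := by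
  have hcard : ∑ i ∈ s, f i = #(s.filter fun i => f i = 1) := by
    rw [Finset.natCast_card_filter]
    exact Finset.sum_congr rfl fun i _ => by rcases hf i with h | h <;> simp [h]
  rw [hcard]
  exact_mod_cast Nat.le_self_pow two_ne_zero _

theorem Ealpha_eq_of_diag_eq_zero {V : Type*} [Fintype V] [DecidableEq V] {A : Matrix V V ℝ}
    (hA : ∀ v, A v v = 0) (α : ℝ) :
    Ealpha α A = α ^ 2 * ∑ v, outdeg A v ^ 2 + (1 - α) ^ 2 * (A * A).trace := by
  have hDA : (diagonal (outdeg A) * A).trace = 0 := by simp [Matrix.trace, hA]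
  have hAD : (A * diagonal (outdeg A)).trace = 0 := by simp [Matrix.trace, hA]
  have hDD : (diagonal (outdeg A) * diagonal (outdeg A)).trace = ∑ v, outdeg A v ^ 2 := by
    simp [Matrix.trace, sq]
  rw [Ealpha, Aalpha]
  simp only [add_mul, mul_add, Matrix.trace_add, Matrix.smul_mul, Matrix.mul_smul,
    Matrix.trace_smul, smul_eq_mul, hDA, hAD, hDD]
  ring

theorem trace_mul_self_eq_c2star {V : Type*} [Fintype V] [DecidableEq V] {A : Matrix V V ℝ}
    {S : Finset V} (hS : ∀ u v, A u v * A v u ≠ 0 → u ∈ S) : (A * A).trace = c2star A S := by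
  have hzero : ∀ u v, u ∉ S → A u v * A v u = 0 := fun u v hu => by_contra fun h => hu (hS u v h)
  calc (A * A).trace = ∑ u ∈ S, ∑ v ∈ S, A u v * A v u := by
        simp only [Matrix.trace, Matrix.diag, Matrix.mul_apply]
        rw [← Finset.sum_subset (subset_univ S) fun u _ hu =>
          Finset.sum_eq_zero fun v _ => hzero u v hu]
        refine Finset.sum_congr rfl fun u _ =>
          (Finset.sum_subset (subset_univ S) fun v _ hv => ?_).symm
        rw [mul_comm]
        exact hzero v u hv
    _ = c2star A S := by
        simp only [c2star, subm, Matrix.trace, Matrix.diag, Matrix.mul_apply,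
          Matrix.submatrix_apply]
        rw [← Finset.sum_coe_sort S]
        exact Finset.sum_congr rfl fun u _ => (Finset.sum_coe_sort S _).symm

noncomputable def fiberOutdeg {V : Type*} [Fintype V] [DecidableEq V] (A : Matrix V V ℝ)
    (r : V → V) (v : V) : ℝ :=
  ∑ w ∈ univ.filter (fun w => r w = r v), A v w

namespace IsGnm

variable {V : Type*} [Fintype V] [DecidableEq V] {A : Matrix V V ℝ} {S : Finset V} {r : V → V}
  {n m : ℕ}

theorem nonneg (hG : IsGnm A S r n m) (u v : V) : 0 ≤ A u v := by
  rcases hG.zero_one u v with h | h <;> simp [h]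

theorem apply_eq_zero (hG : IsGnm A S r n m) {u w : V} (hS : ¬(u ∈ S ∧ w ∈ S))
    (hr : r u ≠ r w) : A u w = 0 :=
  (hG.zero_one u w).resolve_right fun h => (hG.arc_cases u w h).elim hS hr

theorem fiberOutdeg_nonneg (hG : IsGnm A S r n m) (v : V) : 0 ≤ fiberOutdeg A r v :=
  Finset.sum_nonneg fun w _ => hG.nonneg v w

theorem fiberOutdeg_le_sq (hG : IsGnm A S r n m) (v : V) :
    fiberOutdeg A r v ≤ fiberOutdeg A r v ^ 2 :=
  sum_le_sq_sum_of_zero_or_one (hG.zero_one v)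

theorem outdeg_of_notMem (hG : IsGnm A S r n m) {v : V} (hv : v ∉ S) :
    outdeg A v = fiberOutdeg A r v :=
  (Finset.sum_subset (subset_univ _) fun w _ hw =>
    hG.apply_eq_zero (fun h => hv h.1) fun h => hw (by simp [h])).symm

theorem outdeg_of_mem (hG : IsGnm A S r n m) {v : V} (hv : v ∈ S) :
    outdeg A v = dStar A S v + fiberOutdeg A r v := by
  have hrv := hG.r_fix v hv
  have hsplit : ∀ w, A v w = (if w ∈ S then A v w else 0) + (if r w = r v then A v w else 0) := by
    intro w
    by_cases hwv : w = v
    · simp [hwv, hG.loopless]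
    by_cases hw : w ∈ S
    · simp [hw, hG.r_fix w hw, hrv, hwv]
    · by_cases hrw : r w = r v
      · simp [hw, hrw]
      · simp [hw, hrw, hG.apply_eq_zero (fun h => hw h.2) (Ne.symm hrw)]
  rw [outdeg, Finset.sum_congr rfl fun w _ => hsplit w, Finset.sum_add_distrib,
    Finset.sum_ite_mem, univ_inter, ← Finset.sum_filter]
  rfl

theorem one_le_dStar (hG : IsGnm A S r n m) {s : V} (hs : s ∈ S) : 1 ≤ dStar A S s := by
  obtain ⟨u, hu, hus⟩ := Finset.exists_mem_ne (by linarith [hG.two_le_m, hG.card_S]) s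
  obtain ⟨c, ⟨-, hc, hsc⟩, -⟩ := ((hG.strong s hs u hu).cases_head).resolve_left (Ne.symm hus)
  rw [← hsc]
  exact Finset.single_le_sum (fun w _ => hG.nonneg s w) hc

theorem sum_fiberOutdeg_fiber (hG : IsGnm A S r n m) {s : V} (hs : s ∈ S) :
    ∑ v ∈ univ.filter (fun v => r v = s), fiberOutdeg A r v = fibCard r s - 1 := by
  classical
  let B : Matrix {v // r v = s} {v // r v = s} ℝ := fun u w => A u w
  have hB : B + Bᵀ = (fiberGraph A r s).adjMatrix ℝ := by
    ext u w
    have hr : r u = r w := u.2.trans w.2.symm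
    rw [Matrix.add_apply, Matrix.transpose_apply, SimpleGraph.adjMatrix_apply]
    split_ifs with hadj
    · rcases hadj.2 with h | h
      · simp [B, h, hG.fiber_no_symm _ _ hr h]
      · simp [B, h, hG.fiber_no_symm _ _ hr.symm h]
    · by_cases huw : u = w
      · simp [B, huw, hG.loopless]
      · have hne : ¬(A u w = 1 ∨ A w u = 1) := fun h => hadj ⟨huw, h⟩
        push Not at hne
        simp [B, (hG.zero_one u w).resolve_right hne.1, (hG.zero_one w u).resolve_right hne.2]
  have hcard : #(fiberGraph A r s).edgeFinset + 1 = fibCard r s := by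
    rw [(hG.fiber_tree s hs).card_edgeFinset, fibCard, Fintype.card_subtype]
  calc ∑ v ∈ univ.filter (fun v => r v = s), fiberOutdeg A r v
      = ∑ u : {v // r v = s}, ∑ w : {v // r v = s}, B u w := by
        rw [Finset.sum_subtype (p := fun v => r v = s) _ (by simp)]
        refine Finset.sum_congr rfl fun u _ => ?_
        rw [fiberOutdeg, u.2, Finset.sum_subtype (p := fun v => r v = s) _ (by simp)]
    _ = fibCard r s - 1 := by
        rw [sum_sum_eq_card_edgeFinset _ hB, ← hcard]
        push_cast
        ring

theorem sum_fiberOutdeg (hG : IsGnm A S r n m) : ∑ v, fiberOutdeg A r v = (n : ℝ) - m := by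
  have hn : ∑ s ∈ S, (fibCard r s : ℝ) = n := by
    rw [← hG.card_V, ← Finset.card_univ,
      Finset.card_eq_sum_card_fiberwise fun v _ => hG.r_mem v]
    push_cast
    rfl
  rw [← Finset.sum_fiberwise_of_maps_to fun v _ => hG.r_mem v,
    Finset.sum_congr rfl fun s hs => hG.sum_fiberOutdeg_fiber hs, Finset.sum_sub_distrib, hn]
  simp [hG.card_S]

theorem trace_mul_self (hG : IsGnm A S r n m) : (A * A).trace = c2star A S := by
  refine trace_mul_self_eq_c2star fun u v h => ?_
  have huv : A u v = 1 := (hG.zero_one u v).resolve_left fun h' => h (by simp [h'])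
  have hvu : A v u ≠ 0 := fun h' => h (by simp [h'])
  exact ((hG.arc_cases u v huv).resolve_right fun hr => hvu (hG.fiber_no_symm u v hr huv)).1

theorem Ealpha_eq (hG : IsGnm A S r n m) (α : ℝ) :
    Ealpha α A = α ^ 2 * (∑ s ∈ S, (dStar A S s + fiberOutdeg A r s) ^ 2 +
      ∑ v ∈ Sᶜ, fiberOutdeg A r v ^ 2) + (1 - α) ^ 2 * c2star A S := by
  rw [Ealpha_eq_of_diag_eq_zero hG.loopless, hG.trace_mul_self, ← Finset.sum_add_sum_compl S]
  congr 3
  · exact Finset.sum_congr rfl fun s hs => by rw [hG.outdeg_of_mem hs]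
  · exact Finset.sum_congr rfl fun v hv => by rw [hG.outdeg_of_notMem (Finset.mem_compl.1 hv)]

theorem inTrees_iff (hG : IsGnm A S r n m) :
    InTrees A S r ↔
      (∀ s ∈ S, fiberOutdeg A r s = 0) ∧ ∀ v ∈ Sᶜ, fiberOutdeg A r v ^ 2 = fiberOutdeg A r v := by
  have hroot : ∀ s ∈ S, fiberOutdeg A r s = ∑ w ∈ univ.filter (fun w => r w = s), A s w :=
    fun s hs => by rw [fiberOutdeg, hG.r_fix s hs]
  refine ⟨fun ⟨hout, hin⟩ => ⟨fun s hs => (hroot s hs).trans (hin s hs), fun v hv => ?_⟩,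
    fun ⟨hin, hout⟩ => ⟨fun v hv => ?_, fun s hs => (hroot s hs).symm.trans (hin s hs)⟩⟩
  · rw [show fiberOutdeg A r v = 1 from hout v (Finset.mem_compl.1 hv), one_pow]
  -- on `Sᶜ` the fiber outdegrees lie in `{0, 1}` and sum to `n - m = #Sᶜ`
  have hle : ∀ u ∈ Sᶜ, 0 ≤ 1 - fiberOutdeg A r u := fun u hu => by
    nlinarith [hout u hu, hG.fiberOutdeg_nonneg u]
  have hsum : ∑ u ∈ Sᶜ, (1 - fiberOutdeg A r u) = 0 := by
    have hT := hG.sum_fiberOutdeg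
    rw [← Finset.sum_add_sum_compl S, Finset.sum_eq_zero hin, zero_add] at hT
    rw [Finset.sum_sub_distrib, hT, Finset.sum_const, Finset.card_compl, hG.card_V, hG.card_S,
      nsmul_one, Nat.cast_sub hG.m_lt_n.le, sub_self]
  change fiberOutdeg A r v = 1
  linarith [(Finset.sum_eq_zero_iff_of_nonneg hle).1 hsum v (Finset.mem_compl.2 hv)]

theorem outStarAt_iff (hG : IsGnm A S r n m) {v : V} (hv : v ∈ S) :
    OutStarAt A S r v ↔ ∀ u ≠ v, fiberOutdeg A r u = 0 := by
  constructor
  · rintro ⟨htriv, hstar⟩ u huv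
    refine Finset.sum_eq_zero fun w hw => (hG.zero_one u w).resolve_right fun huw => ?_
    by_cases hru : r u = v
    · exact huv (hstar u w hru huw)
    · have hw' : r w = r u := (Finset.mem_filter.1 hw).2
      have := Finset.card_le_one.1 (htriv (r u) (hG.r_mem u) hru).le u (by simp) w (by simp [hw'])
      subst this
      simp [hG.loopless] at huw
  · intro hzero
    refine ⟨fun s hs hsv => ?_, fun u w hru huw => by_contra fun huv => ?_⟩
    · have h := hG.sum_fiberOutdeg_fiber hs
      rw [Finset.sum_eq_zero fun u hu => hzero u fun huv => hsv ?_] at h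
      · exact_mod_cast sub_eq_zero.1 h.symm
      · rw [← (Finset.mem_filter.1 hu).2, huv, hG.r_fix v hv]
    · rcases hG.arc_cases u w huw with ⟨huS, -⟩ | hr
      · exact huv ((hG.r_fix u huS).symm.trans hru)
      · have : A u w ≤ fiberOutdeg A r u :=
          Finset.single_le_sum (fun w _ => hG.nonneg u w) (by simp [hr])
        linarith [hzero u huv]

end IsGnm

theorem stmt12_general {V : Type*} [Fintype V] [DecidableEq V] (A : Matrix V V ℝ) (S : Finset V)
    (r : V → V) (n m : ℕ) (hG : IsGnm A S r n m) (v₁ : V) (hv₁ : v₁ ∈ S)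
    (hmax : ∀ s ∈ S, dStar A S s ≤ dStar A S v₁)
    (α : ℝ) :
    (α ^ 2 * ∑ s ∈ S, (dStar A S s) ^ 2 + α ^ 2 * ((n : ℝ) - m)
        + (1 - α) ^ 2 * c2star A S ≤ Ealpha α A ∧
      Ealpha α A ≤ α ^ 2 * (dStar A S v₁ + (n : ℝ) - m) ^ 2
        + α ^ 2 * ∑ s ∈ S.erase v₁, (dStar A S s) ^ 2 + (1 - α) ^ 2 * c2star A S) ∧
    (0 < α →
      ((Ealpha α A =
          α ^ 2 * ∑ s ∈ S, (dStar A S s) ^ 2 + α ^ 2 * ((n : ℝ) - m)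
            + (1 - α) ^ 2 * c2star A S ↔ InTrees A S r) ∧
       (Ealpha α A =
          α ^ 2 * (dStar A S v₁ + (n : ℝ) - m) ^ 2
            + α ^ 2 * ∑ s ∈ S.erase v₁, (dStar A S s) ^ 2 + (1 - α) ^ 2 * c2star A S ↔
          ∃ v ∈ S, (∀ s ∈ S, dStar A S s ≤ dStar A S v) ∧ OutStarAt A S r v))) := by
  have hd : ∀ s ∈ S, 0 < dStar A S s := fun s hs => one_pos.trans_le (hG.one_le_dStar hs)
  have ht := hG.fiberOutdeg_nonneg
  have ht2 := hG.fiberOutdeg_le_sq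
  have hT : 0 < ∑ v, fiberOutdeg A r v := by
    rw [hG.sum_fiberOutdeg, sub_pos]
    exact_mod_cast hG.m_lt_n
  simp only [add_sub_assoc, ← hG.sum_fiberOutdeg, hG.Ealpha_eq, ← mul_add]
  refine ⟨⟨?_, ?_⟩, fun hα => ?_⟩
  · gcongr α ^ 2 * ?_ + _
    exact sum_sq_add_sum_le_sum_add_sq (fun s hs => (hd s hs).le) ht ht2
  · gcongr α ^ 2 * ?_ + _
    exact sum_add_sq_le_sq_add_sum_sq hv₁ hmax (hd v₁ hv₁).le ht
  simp only [add_left_inj, mul_right_inj' (pow_ne_zero 2 hα.ne'),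
    sum_add_sq_eq_sum_sq_add_sum_iff hd ht ht2, hG.inTrees_iff,
    sum_add_sq_eq_sq_add_sum_sq_iff hv₁ hmax (hd v₁ hv₁) ht hT, true_and]
  refine exists_congr fun v => and_congr_right fun hv => ?_
  rw [hG.outStarAt_iff hv]
  exact and_congr_left' ⟨fun h s hs => h ▸ hmax s hs, fun h => le_antisymm (hmax v hv) (h v₁ hv₁)⟩

/-- For `G ∈ 𝒢_n^m` with `v₁ ∈ S` of maximal within-`S` outdegree,
`α²Σ_{s∈S}(d*(s))² + α²(n-m) + (1-α)²c₂(G*) ≤ E_α(G) ≤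
 α²(d*(v₁)+n-m)² + α²Σ_{s≠v₁}(d*(s))² + (1-α)²c₂(G*)`; for `0 < α < 1`, the lower bound is
attained iff all hung trees are in-trees, and the upper bound iff there is a vertex of
maximal within-`S` outdegree whose fiber is an out-star while all other fibers are trivial. -/
theorem stmt12 {V : Type*} [Fintype V] [DecidableEq V] (A : Matrix V V ℝ) (S : Finset V)
    (r : V → V) (n m : ℕ) (hG : IsGnm A S r n m) (v₁ : V) (hv₁ : v₁ ∈ S)
    (hmax : ∀ s ∈ S, dStar A S s ≤ dStar A S v₁)
    (α : ℝ) (hα0 : 0 ≤ α) (hα1 : α < 1) :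
    (α ^ 2 * ∑ s ∈ S, (dStar A S s) ^ 2 + α ^ 2 * ((n : ℝ) - m)
        + (1 - α) ^ 2 * c2star A S ≤ Ealpha α A ∧
      Ealpha α A ≤ α ^ 2 * (dStar A S v₁ + (n : ℝ) - m) ^ 2
        + α ^ 2 * ∑ s ∈ S.erase v₁, (dStar A S s) ^ 2 + (1 - α) ^ 2 * c2star A S) ∧
    (0 < α →
      ((Ealpha α A =
          α ^ 2 * ∑ s ∈ S, (dStar A S s) ^ 2 + α ^ 2 * ((n : ℝ) - m)
            + (1 - α) ^ 2 * c2star A S ↔ InTrees A S r) ∧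
       (Ealpha α A =
          α ^ 2 * (dStar A S v₁ + (n : ℝ) - m) ^ 2
            + α ^ 2 * ∑ s ∈ S.erase v₁, (dStar A S s) ^ 2 + (1 - α) ^ 2 * c2star A S ↔
          ∃ v ∈ S, (∀ s ∈ S, dStar A S s ≤ dStar A S v) ∧ OutStarAt A S r v))) :=
  stmt12_general A S r n m hG v₁ hv₁ hmax α
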